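/- For every integer m ≥ 0 and real θ, ∑_{j=0}^m (-1)^j C(m+j+1, 2j+1) (2 cos θ)^{2j+1} · sin θ = cos θ · U_{2m+1}(sin θ), where U_k is the Chebyshev polynomial of the second kind. -/

import Mathlib

open Real Finset Polynomial

/-
With `y = 2 cos θ`, the sum equals `(-1)^m S_{2m+1}(y)`, where `S_n(2x) = U_n(x)` is the rescaled
Chebyshev polynomial: both sequences satisfy `a_{m+2} = (2 - y²) a_{m+1} - a_m` (on the binomial
side by applying Pascal's rule twice) and agree for `m = 0, 1`. Multiplied by `sin θ` this is
`(-1)^m sin ((2m+2)θ)`, which is also the right side, as `sin θ = cos (π/2 - θ)` and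
`sin ((2m+2)(π/2 - θ)) = (-1)^m sin ((2m+2)θ)`.
-/

theorem Nat.choose_add_two_add_choose (n r : ℕ) :
    (n + 2).choose (r + 2) + n.choose (r + 2) = 2 * (n + 1).choose (r + 2) + n.choose r := by
  rw [Nat.choose_succ_succ (n + 1) (r + 1), Nat.choose_succ_succ n (r + 1),
    Nat.choose_succ_succ n r]
  ring

theorem Polynomial.Chebyshev.S_add_four (R : Type*) [CommRing R] (n : ℤ) :
    S R (n + 4) = (X ^ 2 - 2) * S R (n + 2) - S R n := by
  have h₂ := S_add_two R (n + 2)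
  have h₁ := S_add_two R (n + 1)
  have h₀ := S_add_two R n
  rw [show n + 2 + 2 = n + 4 by ring, show n + 2 + 1 = n + 3 by ring] at h₂
  rw [show n + 1 + 2 = n + 3 by ring, show n + 1 + 1 = n + 2 by ring] at h₁
  linear_combination h₂ + X * h₁ + h₀

section OddChooseSum

variable {R : Type*} [CommRing R]

def oddChooseTerm (y : R) (m j : ℕ) : R :=
  (-1) ^ j * ((m + j + 1).choose (2 * j + 1) : R) * y ^ (2 * j + 1)

def oddChooseSum (m : ℕ) (y : R) : R :=
  ∑ j ∈ range (m + 1), oddChooseTerm y m j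

theorem oddChooseTerm_eq_zero {m j : ℕ} (h : m < j) (y : R) : oddChooseTerm y m j = 0 := by
  simp [oddChooseTerm, Nat.choose_eq_zero_of_lt (by omega : m + j + 1 < 2 * j + 1)]

theorem oddChooseTerm_zero (y : R) (m : ℕ) : oddChooseTerm y m 0 = (m + 1) * y := by
  simp [oddChooseTerm]

theorem oddChooseTerm_add_two_succ (y : R) (m j : ℕ) :
    oddChooseTerm y (m + 2) (j + 1) =
      2 * oddChooseTerm y (m + 1) (j + 1) - oddChooseTerm y m (j + 1)
        - y ^ 2 * oddChooseTerm y (m + 1) j := by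
  have h := congr(($(Nat.choose_add_two_add_choose (m + j + 2) (2 * j + 1)) : R))
  push_cast at h
  simp only [oddChooseTerm]
  rw [show m + 2 + (j + 1) + 1 = m + j + 2 + 2 by ring,
    show m + 1 + (j + 1) + 1 = m + j + 2 + 1 by ring, show m + (j + 1) + 1 = m + j + 2 by ring,
    show m + 1 + j + 1 = m + j + 2 by ring, show 2 * (j + 1) + 1 = 2 * j + 1 + 2 by ring]
  linear_combination (-1 : R) ^ (j + 1) * y ^ (2 * j + 1 + 2) * h

theorem oddChooseSum_eq_sum_range {m N : ℕ} (h : m + 1 ≤ N) (y : R) :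
    oddChooseSum m y = ∑ j ∈ range N, oddChooseTerm y m j :=
  sum_subset (range_subset_range.mpr h) fun j hjN hjm ↦
    oddChooseTerm_eq_zero (by simp at hjN hjm; omega) y

theorem oddChooseSum_add_two (m : ℕ) (y : R) :
    oddChooseSum (m + 2) y = (2 - y ^ 2) * oddChooseSum (m + 1) y - oddChooseSum m y := by
  have h₁ := oddChooseSum_eq_sum_range (show m + 1 + 1 ≤ m + 3 by omega) y
  have h₀ := oddChooseSum_eq_sum_range (show m + 1 ≤ m + 3 by omega) y
  -- extend both sums to `range (m + 3)`, like the left side, and split off the `j = 0` terms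
  rw [sum_range_succ'] at h₁ h₀
  calc oddChooseSum (m + 2) y
      = ∑ j ∈ range (m + 2), oddChooseTerm y (m + 2) (j + 1) + oddChooseTerm y (m + 2) 0 :=
        sum_range_succ' _ _
    _ = 2 * (∑ j ∈ range (m + 2), oddChooseTerm y (m + 1) (j + 1) + oddChooseTerm y (m + 1) 0)
          - y ^ 2 * ∑ j ∈ range (m + 2), oddChooseTerm y (m + 1) j
          - (∑ j ∈ range (m + 2), oddChooseTerm y m (j + 1) + oddChooseTerm y m 0) := by
      simp only [oddChooseTerm_add_two_succ, sum_sub_distrib, ← mul_sum, oddChooseTerm_zero]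
      push_cast
      ring
    _ = (2 - y ^ 2) * oddChooseSum (m + 1) y - oddChooseSum m y := by
      rw [← h₁, ← h₀, oddChooseSum]
      ring

theorem oddChooseSum_eq_neg_one_pow_mul_eval_S (m : ℕ) (y : R) :
    oddChooseSum m y = (-1) ^ m * (Chebyshev.S R (2 * m + 1)).eval y := by
  induction m using Nat.twoStepInduction with
  | zero => simp [oddChooseSum, oddChooseTerm]
  | one =>
    rw [show (2 * ((1 : ℕ) : ℤ) + 1) = 1 + 2 by norm_num, Chebyshev.S_add_two,
      one_add_one_eq_two, Chebyshev.S_two, Chebyshev.S_one]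
    simp [oddChooseSum, sum_range_succ, oddChooseTerm]
    ring
  | more m ih₀ ih₁ =>
    rw [oddChooseSum_add_two, ih₀, ih₁,
      show (2 * ((m + 2 : ℕ) : ℤ) + 1) = 2 * m + 1 + 4 by push_cast; ring, Chebyshev.S_add_four,
      show (2 * ((m + 1 : ℕ) : ℤ) + 1) = 2 * m + 1 + 2 by push_cast; ring]
    simp only [eval_sub, eval_mul, eval_pow, eval_X, eval_ofNat]
    ring

end OddChooseSum

theorem Polynomial.Chebyshev.U_real_sin_mul_cos_two_mul_add_one (m : ℕ) (θ : ℝ) :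
    (U ℝ (2 * m + 1)).eval (sin θ) * cos θ = (-1) ^ m * sin ((2 * m + 2) * θ) := by
  have h := U_real_cos (π / 2 - θ) (2 * m + 1)
  rw [cos_pi_div_two_sub, sin_pi_div_two_sub] at h
  have hangle :
      ((2 * m + 1 : ℤ) + 1 : ℝ) * (π / 2 - θ) = (m + 1 : ℕ) * π - (2 * m + 2) * θ := by
    push_cast
    ring
  rw [h, hangle, sin_nat_mul_pi_sub]
  ring

theorem stmt_15 (m : ℕ) (θ : ℝ) :
    (∑ j ∈ Finset.range (m + 1), (-1 : ℝ) ^ j * (Nat.choose (m + j + 1) (2 * j + 1)) *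
        (2 * Real.cos θ) ^ (2 * j + 1)) * Real.sin θ
      = Real.cos θ * (Polynomial.Chebyshev.U ℝ (2 * m + 1)).eval (Real.sin θ) := by
  change oddChooseSum m (2 * cos θ) * sin θ = _
  rw [oddChooseSum_eq_neg_one_pow_mul_eval_S, mul_assoc, Chebyshev.S_two_mul_real_cos,
    mul_comm (cos θ), Chebyshev.U_real_sin_mul_cos_two_mul_add_one]
  push_cast
  ring_nf
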